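/- Rank-one structure from complementary slackness (Eq. (11)): Let w ∈ EuclideanSpace ℝ (Fin 3) with ‖w‖ ≤ 1, and let M ∈ Matrix (Fin 2) (Fin 2) ℂ be positive semidefinite with M ≠ 0. If Re(Matrix.trace (ρ(w) * M)) = 0, then ‖w‖ = 1 and there exists a real number p > 0 such that M = p • (1 − (w 0 • σ₁ + w 1 • σ₂ + w 2 • σ₃)). -/

import Mathlib

open Matrix Complex Finset RealInnerProductSpace
open scoped ComplexOrder

/-- The first Pauli matrix. -/
noncomputable def pauli1 : Matrix (Fin 2) (Fin 2) ℂ := !![0, 1; 1, 0]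

/-- The second Pauli matrix. -/
noncomputable def pauli2 : Matrix (Fin 2) (Fin 2) ℂ := !![0, -Complex.I; Complex.I, 0]

/-- The third Pauli matrix. -/
noncomputable def pauli3 : Matrix (Fin 2) (Fin 2) ℂ := !![1, 0; 0, -1]

/-- The operator `v ⬝ σ` for a Bloch vector `v`. -/
noncomputable def blochOp (v : EuclideanSpace ℝ (Fin 3)) : Matrix (Fin 2) (Fin 2) ℂ :=
  (v 0 : ℂ) • pauli1 + (v 1 : ℂ) • pauli2 + (v 2 : ℂ) • pauli3

/-- The qubit state with Bloch vector `v`. -/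
noncomputable def qubitState (v : EuclideanSpace ℝ (Fin 3)) : Matrix (Fin 2) (Fin 2) ℂ :=
  (1 / 2 : ℂ) • (1 + blochOp v)

/-- An `N`-outcome POVM on `ℂ^d`. -/
def IsPOVM {N d : ℕ} (M : Fin N → Matrix (Fin d) (Fin d) ℂ) : Prop :=
  (∀ i, (M i).PosSemidef) ∧ ∑ i, M i = 1

/-- Priors: a probability distribution. -/
def IsPriors {N : ℕ} (q : Fin N → ℝ) : Prop :=
  (∀ i, 0 ≤ q i) ∧ ∑ i, q i = 1

/-- Success probability of the POVM `M` for qubit states with Bloch vectors `v`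
and priors `q`. -/
noncomputable def succProb {N : ℕ} (q : Fin N → ℝ) (v : Fin N → EuclideanSpace ℝ (Fin 3))
    (M : Fin N → Matrix (Fin 2) (Fin 2) ℂ) : ℝ :=
  ∑ i, q i * (Matrix.trace (qubitState (v i) * M i)).re

/-- The geometric KKT conditions for `(q, v)` satisfied by `(r, w)`. -/
def GeomKKT {N : ℕ} (q : Fin N → ℝ) (v : Fin N → EuclideanSpace ℝ (Fin 3))
    (r : Fin N → ℝ) (w : Fin N → EuclideanSpace ℝ (Fin 3)) : Prop :=
  (∀ i j, r i • w i - r j • w j = q j • v j - q i • v i) ∧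
  (∃ p : Fin N → ℝ, (∀ i, 0 < p i) ∧ (∑ i, p i = 1) ∧ (∑ i, p i • w i = 0)) ∧
  (∀ i, ‖w i‖ = 1) ∧
  (∀ i j, r i - r j = q j - q i)

/-!
Write `W = blochOp w`. It is Hermitian with `W * W = ‖w‖²`, so
`1 + W = ½ (1 + W)ᴴ (1 + W) + ½ (1 - ‖w‖²)` is positive semidefinite, and `2 ρ(w) = 1 + W`.
Two positive semidefinite matrices whose product has trace zero multiply to zero, hence
`W * M = -M`. Then `‖w‖² M = W * W * M = M` forces `‖w‖ = 1`, and the polarized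
Cayley–Hamilton identity `W M + M W = tr M • W + tr (W M)` for `2 × 2` matrices
gives `M = (tr M / 2) • (1 - W)`.
-/

open scoped MatrixOrder in
theorem Matrix.PosSemidef.mul_eq_zero_of_re_trace_mul_eq_zero {𝕜 n : Type*} [RCLike 𝕜]
    [Fintype n] {A B : Matrix n n 𝕜} (hA : A.PosSemidef) (hB : B.PosSemidef)
    (h : RCLike.re (A * B).trace = 0) : A * B = 0 := by
  classical
  obtain ⟨X, rfl⟩ := CStarAlgebra.nonneg_iff_eq_star_mul_self.mp hA.nonneg
  obtain ⟨Y, rfl⟩ := CStarAlgebra.nonneg_iff_eq_star_mul_self.mp hB.nonneg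
  simp only [star_eq_conjTranspose] at h ⊢
  have htrace : (Xᴴ * X * (Yᴴ * Y)).trace = ((Y * Xᴴ)ᴴ * (Y * Xᴴ)).trace := by
    rw [conjTranspose_mul, conjTranspose_conjTranspose, Matrix.mul_assoc, trace_mul_comm]
    simp only [Matrix.mul_assoc]
  have hYX : Y * Xᴴ = 0 := by
    rw [← trace_conjTranspose_mul_self_eq_zero_iff, ← htrace]
    have hnonneg := RCLike.nonneg_iff.mp
      (htrace ▸ (posSemidef_conjTranspose_mul_self (Y * Xᴴ)).trace_nonneg)
    exact RCLike.ext (by simpa using h) (by simpa using hnonneg.2)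
  calc Xᴴ * X * (Yᴴ * Y) = Xᴴ * (Y * Xᴴ)ᴴ * Y := by
        simp only [conjTranspose_mul, conjTranspose_conjTranspose, Matrix.mul_assoc]
    _ = 0 := by rw [hYX]; simp

theorem Matrix.mul_add_mul_fin_two {R : Type*} [CommRing R] (A B : Matrix (Fin 2) (Fin 2) R) :
    A * B + B * A = A.trace • B + B.trace • A + ((A * B).trace - A.trace * B.trace) • 1 := by
  ext i j
  fin_cases i <;> fin_cases j <;>
    simp [trace_fin_two, mul_apply, Fin.sum_univ_two] <;> ring

theorem blochOp_isHermitian (v : EuclideanSpace ℝ (Fin 3)) : (blochOp v).IsHermitian := by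
  ext i j
  fin_cases i <;> fin_cases j <;> simp [blochOp, pauli1, pauli2, pauli3]

theorem trace_blochOp (v : EuclideanSpace ℝ (Fin 3)) : (blochOp v).trace = 0 := by
  simp [blochOp, pauli1, pauli2, pauli3, trace_fin_two]

theorem blochOp_mul_self (v : EuclideanSpace ℝ (Fin 3)) :
    blochOp v * blochOp v = ((‖v‖ ^ 2 : ℝ) : ℂ) • 1 := by
  rw [EuclideanSpace.norm_sq_eq]
  ext i j
  fin_cases i <;> fin_cases j <;>
    simp [blochOp, pauli1, pauli2, pauli3, mul_apply, Fin.sum_univ_two, Fin.sum_univ_three] <;>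
    ring_nf <;> simp only [I_sq] <;> ring

theorem posSemidef_one_add_blochOp {v : EuclideanSpace ℝ (Fin 3)} (hv : ‖v‖ ≤ 1) :
    (1 + blochOp v).PosSemidef := by
  have hsq : (1 + blochOp v)ᴴ * (1 + blochOp v) =
      2 • (1 + blochOp v) - ((1 - ‖v‖ ^ 2 : ℝ) : ℂ) • 1 := by
    rw [conjTranspose_add, conjTranspose_one, (blochOp_isHermitian v).eq]
    simp only [add_mul, mul_add, mul_one, one_mul, blochOp_mul_self]
    push_cast
    module
  have hdecomp : 1 + blochOp v = (1 / 2 : ℝ) • ((1 + blochOp v)ᴴ * (1 + blochOp v)) +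
      ((1 - ‖v‖ ^ 2) / 2 : ℝ) • 1 := by
    rw [hsq]
    simp only [RCLike.real_smul_eq_coe_smul (K := ℂ)]
    push_cast
    module
  rw [hdecomp]
  have hgap : 0 ≤ 1 - ‖v‖ ^ 2 := by nlinarith [norm_nonneg v]
  exact ((posSemidef_conjTranspose_mul_self _).smul (by norm_num)).add
    (PosSemidef.one.smul (by positivity))

theorem blochOp_mul_eq_neg_of_re_trace_qubitState_mul_eq_zero {v : EuclideanSpace ℝ (Fin 3)}
    (hv : ‖v‖ ≤ 1) {M : Matrix (Fin 2) (Fin 2) ℂ} (hM : M.PosSemidef)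
    (htr : (trace (qubitState v * M)).re = 0) : blochOp v * M = -M := by
  have h : (1 + blochOp v) * M = 0 := by
    refine (posSemidef_one_add_blochOp hv).mul_eq_zero_of_re_trace_mul_eq_zero hM ?_
    rw [qubitState, smul_mul_assoc, trace_smul, smul_eq_mul] at htr
    simpa using htr
  rw [add_mul, one_mul] at h
  exact eq_neg_of_add_eq_zero_right h

theorem norm_eq_one_of_blochOp_mul_eq_neg {v : EuclideanSpace ℝ (Fin 3)}
    {M : Matrix (Fin 2) (Fin 2) ℂ} (hM0 : M ≠ 0) (hWM : blochOp v * M = -M) : ‖v‖ = 1 := by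
  have h : (((‖v‖ ^ 2 : ℝ) : ℂ) - 1) • M = 0 := by
    rw [sub_smul, one_smul, ← smul_one_mul, ← blochOp_mul_self, Matrix.mul_assoc, hWM,
      mul_neg, hWM, neg_neg, sub_self]
  have hsq : ‖v‖ ^ 2 = 1 := by
    exact_mod_cast sub_eq_zero.mp ((smul_eq_zero.mp h).resolve_right hM0)
  exact (pow_eq_one_iff_of_nonneg (norm_nonneg v) two_ne_zero).mp hsq

theorem eq_smul_one_sub_blochOp_of_blochOp_mul_eq_neg {v : EuclideanSpace ℝ (Fin 3)}
    {M : Matrix (Fin 2) (Fin 2) ℂ} (hM : M.IsHermitian) (hWM : blochOp v * M = -M) :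
    M = (M.trace / 2) • (1 - blochOp v) := by
  have hMW : M * blochOp v = -M := by
    simpa [conjTranspose_mul, hM.eq, (blochOp_isHermitian v).eq] using congrArg conjTranspose hWM
  have h := mul_add_mul_fin_two (blochOp v) M
  rw [hWM, hMW, trace_blochOp, trace_neg] at h
  linear_combination (norm := module) (-1 / 2 : ℂ) • h

/-- Rank-one structure from complementary slackness (Eq. (11)). -/
theorem rank_one_structure (w : EuclideanSpace ℝ (Fin 3)) (hw : ‖w‖ ≤ 1)
    (M : Matrix (Fin 2) (Fin 2) ℂ) (hM : M.PosSemidef) (hM0 : M ≠ 0)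
    (htr : (Matrix.trace (qubitState w * M)).re = 0) :
    ‖w‖ = 1 ∧ ∃ p : ℝ, 0 < p ∧ M = (p : ℂ) • (1 - blochOp w) := by
  have hWM := blochOp_mul_eq_neg_of_re_trace_qubitState_mul_eq_zero hw hM htr
  refine ⟨norm_eq_one_of_blochOp_mul_eq_neg hM0 hWM, ?_⟩
  have htrace_pos : 0 < M.trace :=
    hM.trace_nonneg.lt_of_ne (Ne.symm (hM.trace_eq_zero_iff.not.mpr hM0))
  obtain ⟨t, ht, htM⟩ := RCLike.pos_iff_exists_ofReal.mp htrace_pos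
  refine ⟨t / 2, by positivity, ?_⟩
  rw [eq_smul_one_sub_blochOp_of_blochOp_mul_eq_neg hM.isHermitian hWM, ← htM]
  norm_num
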